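/- arXiv:0909.1596 — 3 statements merged into one kernel-verified Lean document; each statement's English description precedes it below -/
import Mathlib

section
/- A steady state ρ of the Lindblad generator is an extremal point of the convex set of steady states if and only if ρ is the unique steady state whose support is contained in supp(ρ); that is, ρ is extremal if and only if every steady state σ with supp(σ) ⊆ supp(ρ) satisfies σ = ρ. -/
open Matrix
open scoped ComplexOrder

/-- The Lindblad generator `𝓛(ρ) = -i[H,ρ] + Σ_d (V_d ρ V_d† - ½(V_d† V_d ρ + ρ V_d† V_d))`. -/
noncomputable def lindblad {n : Type*} [Fintype n] [DecidableEq n] {ι : Type*} [Fintype ι]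
    (H : Matrix n n ℂ) (V : ι → Matrix n n ℂ) (ρ : Matrix n n ℂ) : Matrix n n ℂ :=
  -Complex.I • (H * ρ - ρ * H) +
    ∑ d, (V d * ρ * (V d)ᴴ - (1 / 2 : ℂ) • ((V d)ᴴ * V d * ρ + ρ * ((V d)ᴴ * V d)))

/-- A density matrix: positive semidefinite with trace one. -/
def IsDensityMatrix {n : Type*} [Fintype n] (ρ : Matrix n n ℂ) : Prop :=
  ρ.PosSemidef ∧ ρ.trace = 1

/-- A steady state of the Lindblad dynamics. -/
noncomputable def IsSteadyState {n : Type*} [Fintype n] [DecidableEq n] {ι : Type*} [Fintype ι]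
    (H : Matrix n n ℂ) (V : ι → Matrix n n ℂ) (ρ : Matrix n n ℂ) : Prop :=
  IsDensityMatrix ρ ∧ lindblad H V ρ = 0

/-- The support of a matrix: its range as a linear map `ℂ^N → ℂ^N`. -/
noncomputable def matSupport {n : Type*} [Fintype n] (ρ : Matrix n n ℂ) :
    Submodule ℂ (n → ℂ) :=
  LinearMap.range ρ.mulVecLin

/-- An extremal steady state: it cannot be written as a nontrivial convex combination
of two steady states other than itself. -/
noncomputable def IsExtremalSteadyState {n : Type*} [Fintype n] [DecidableEq n]
    {ι : Type*} [Fintype ι]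
    (H : Matrix n n ℂ) (V : ι → Matrix n n ℂ) (ρ : Matrix n n ℂ) : Prop :=
  IsSteadyState H V ρ ∧
    ∀ (a : ℝ) (ρ₁ ρ₂ : Matrix n n ℂ), 0 < a → a < 1 →
      IsSteadyState H V ρ₁ → IsSteadyState H V ρ₂ →
      ρ = a • ρ₁ + (1 - a) • ρ₂ → ρ₁ = ρ ∧ ρ₂ = ρ

/-!
For positive semidefinite `σ` and `ρ`, `supp σ ≤ supp ρ` holds iff `t • σ ≤ ρ` for some `t > 0`:
writing `σ = C Cᴴ` and `ρ = B Bᴴ`, the support inclusion factors `C = B K`, whence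
`σ = B (K Kᴴ) Bᴴ ≤ ‖K Kᴴ‖ • ρ`; conversely, if `t • σ = C Cᴴ` and `ρ - t • σ = D Dᴴ`, then
`ρ = [C D] [C D]ᴴ` has the range of `[C D]`, which contains that of `C`.
Since steady states are the density matrices in the kernel of the linear map `𝓛`, this gives both
directions: if `ρ = a • ρ₁ + (1 - a) • ρ₂` then `a • ρ₁ ≤ ρ`, and if `t • σ ≤ ρ` then
`ρ + t • (ρ - σ)` is again a steady state, with `ρ` strictly between it and `σ`.
-/

open scoped MatrixOrder

namespace Matrix

variable {l m n R : Type*}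

theorem exists_eq_mul_of_range_mulVecLin_le [CommSemiring R] [Fintype m] [Fintype n]
    [DecidableEq n] {B : Matrix l m R} {C : Matrix l n R}
    (h : LinearMap.range C.mulVecLin ≤ LinearMap.range B.mulVecLin) :
    ∃ K : Matrix m n R, C = B * K := by
  choose k hk using fun j => h (LinearMap.mem_range_self C.mulVecLin (Pi.single j 1))
  simp only [mulVecLin_apply, mulVec_single_one] at hk
  refine ⟨(of k)ᵀ, ext fun i j => ?_⟩
  simpa [mul_apply, mulVec, dotProduct] using (congrFun (hk j) i).symm

theorem range_mulVecLin_mul_le [CommSemiring R] [Fintype m] [Fintype n] (M : Matrix l m R)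
    (N : Matrix m n R) : LinearMap.range (M * N).mulVecLin ≤ LinearMap.range M.mulVecLin := by
  rw [mulVecLin_mul]
  exact LinearMap.range_comp_le_range _ _

theorem range_mulVecLin_mul_conjTranspose [Field R] [PartialOrder R] [StarRing R]
    [StarOrderedRing R] [Fintype m] [Fintype n] (M : Matrix m n R) :
    LinearMap.range (M * Mᴴ).mulVecLin = LinearMap.range M.mulVecLin :=
  Submodule.eq_of_le_of_finrank_eq (range_mulVecLin_mul_le M Mᴴ) (rank_self_mul_conjTranspose M)

end Matrix

theorem eq_of_mem_extremePoints_of_add_smul_sub_mem {𝕜 E : Type*} [Field 𝕜] [LinearOrder 𝕜]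
    [IsStrictOrderedRing 𝕜] [AddCommGroup E] [Module 𝕜 E] {A : Set E} {x y : E}
    (hx : x ∈ A.extremePoints 𝕜) (hy : y ∈ A) {t : 𝕜} (ht : 0 < t) (h : x + t • (x - y) ∈ A) :
    y = x := by
  have ht' : 1 + t ≠ 0 := by positivity
  refine hx.2 hy h ⟨t / (1 + t), 1 / (1 + t), by positivity, by positivity, by field_simp; ring, ?_⟩
  calc (t / (1 + t)) • y + (1 / (1 + t)) • (x + t • (x - y)) = ((1 + t) / (1 + t)) • x := by
        module
    _ = x := by rw [div_self ht', one_smul]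

section DensityMatrices

variable {n : Type*} [Fintype n] [DecidableEq n]

theorem matSupport_smul_le (c : ℝ) (A : Matrix n n ℂ) : matSupport (c • A) ≤ matSupport A := by
  have h : c • A = A * ((c : ℂ) • (1 : Matrix n n ℂ)) := by
    rw [Matrix.mul_smul, Matrix.mul_one]
    rfl
  rw [matSupport, h]
  exact range_mulVecLin_mul_le _ _

namespace Matrix.PosSemidef

variable {A B ρ σ : Matrix n n ℂ}

open scoped Matrix.Norms.L2Operator in
theorem exists_eq_mul_conjTranspose (hA : A.PosSemidef) : ∃ C : Matrix n n ℂ, A = C * Cᴴ :=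
  CStarAlgebra.nonneg_iff_eq_mul_star_self.mp hA.nonneg

theorem matSupport_le_add (hA : A.PosSemidef) (hB : B.PosSemidef) :
    matSupport A ≤ matSupport (A + B) := by
  obtain ⟨C, rfl⟩ := hA.exists_eq_mul_conjTranspose
  obtain ⟨D, rfl⟩ := hB.exists_eq_mul_conjTranspose
  have hCD : C * Cᴴ + D * Dᴴ = fromCols C D * (fromCols C D)ᴴ := by
    rw [conjTranspose_fromCols_eq_fromRows_conjTranspose, fromCols_mul_fromRows]
  have hC : fromCols C D * fromRows (1 : Matrix n n ℂ) (0 : Matrix n n ℂ) = C := by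
    rw [fromCols_mul_fromRows, Matrix.mul_one, Matrix.mul_zero, add_zero]
  rw [matSupport, matSupport, hCD, range_mulVecLin_mul_conjTranspose,
    range_mulVecLin_mul_conjTranspose]
  simpa only [hC] using
    range_mulVecLin_mul_le (fromCols C D) (fromRows (1 : Matrix n n ℂ) (0 : Matrix n n ℂ))

open scoped Matrix.Norms.L2Operator in
theorem matSupport_le_iff (hσ : σ.PosSemidef) (hρ : ρ.PosSemidef) :
    matSupport σ ≤ matSupport ρ ↔ ∃ t : ℝ, 0 < t ∧ t • σ ≤ ρ := by
  refine ⟨fun h => ?_, fun ⟨t, ht, hle⟩ => ?_⟩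
  · obtain ⟨C, rfl⟩ := hσ.exists_eq_mul_conjTranspose
    obtain ⟨B, rfl⟩ := hρ.exists_eq_mul_conjTranspose
    simp only [matSupport, range_mulVecLin_mul_conjTranspose] at h
    obtain ⟨K, rfl⟩ := exists_eq_mul_of_range_mulVecLin_le h
    have hle : B * K * (B * K)ᴴ ≤ ‖K * Kᴴ‖ • (B * Bᴴ) := by
      simpa [conjTranspose_mul, mul_assoc, star_eq_conjTranspose] using
        CStarAlgebra.star_right_conjugate_le_norm_smul (a := B) (IsSelfAdjoint.mul_star_self K)
    refine ⟨(‖K * Kᴴ‖ + 1)⁻¹, by positivity, ?_⟩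
    calc (‖K * Kᴴ‖ + 1)⁻¹ • (B * K * (B * K)ᴴ)
        ≤ (‖K * Kᴴ‖ + 1)⁻¹ • (‖K * Kᴴ‖ • (B * Bᴴ)) :=
          smul_le_smul_of_nonneg_left hle (by positivity)
      _ = ((‖K * Kᴴ‖ + 1)⁻¹ * ‖K * Kᴴ‖) • (B * Bᴴ) := smul_smul _ _ _
      _ ≤ (1 : ℝ) • (B * Bᴴ) := by
        refine smul_le_smul_of_nonneg_right ?_ hρ.nonneg
        rw [inv_mul_le_iff₀ (by positivity)]
        linarith
      _ = B * Bᴴ := one_smul _ _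
  · have h := (hσ.smul ht.le).matSupport_le_add (le_iff.mp hle)
    rw [add_sub_cancel] at h
    simpa [smul_smul, inv_mul_cancel₀ ht.ne'] using (matSupport_smul_le t⁻¹ (t • σ)).trans h

end Matrix.PosSemidef

theorem mem_extremePoints_iff_forall_matSupport_le {K : Submodule ℝ (Matrix n n ℂ)}
    {ρ : Matrix n n ℂ} (hρ : IsDensityMatrix ρ) (hρK : ρ ∈ K) :
    ρ ∈ {σ | IsDensityMatrix σ ∧ σ ∈ K}.extremePoints ℝ ↔
      ∀ σ, IsDensityMatrix σ → σ ∈ K → matSupport σ ≤ matSupport ρ → σ = ρ := by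
  refine ⟨fun hext σ hσ hσK hsupp => ?_, fun huniq => ⟨⟨hρ, hρK⟩, ?_⟩⟩
  · obtain ⟨t, ht, hle⟩ := (hσ.1.matSupport_le_iff hρ.1).mp hsupp
    refine eq_of_mem_extremePoints_of_add_smul_sub_mem hext ⟨hσ, hσK⟩ ht ⟨⟨?_, ?_⟩, ?_⟩
    · have h : ρ + t • (ρ - σ) = (ρ - t • σ) + t • ρ := by module
      rw [h]
      exact (le_iff.mp hle).add (hρ.1.smul ht.le)
    · rw [trace_add, trace_smul, trace_sub, hρ.2, hσ.2, sub_self, smul_zero, add_zero]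
    · exact K.add_mem hρK (K.smul_mem t (K.sub_mem hρK hσK))
  · rintro ρ₁ ⟨h₁, h₁K⟩ ρ₂ ⟨h₂, -⟩ ⟨a, b, ha, hb, -, rfl⟩
    refine huniq ρ₁ h₁ h₁K ((h₁.1.matSupport_le_iff hρ.1).mpr ⟨a, ha, ?_⟩)
    exact le_add_of_nonneg_right (smul_nonneg hb.le h₂.1.nonneg)

end DensityMatrices

section Lindblad

variable {n ι : Type*} [Fintype n] [DecidableEq n] [Fintype ι]
  (H : Matrix n n ℂ) (V : ι → Matrix n n ℂ)

noncomputable def lindbladLinearMap : Matrix n n ℂ →ₗ[ℂ] Matrix n n ℂ where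
  toFun := lindblad H V
  map_add' x y := by
    simp only [lindblad, Matrix.mul_add, Matrix.add_mul, smul_add, smul_sub,
      Finset.sum_add_distrib, Finset.sum_sub_distrib]
    abel
  map_smul' c x := by
    simp only [lindblad, Matrix.mul_smul, Matrix.smul_mul, smul_add, smul_sub, Finset.smul_sum,
      RingHom.id_apply, smul_comm c (-Complex.I), smul_comm c (1 / 2 : ℂ)]

theorem setOf_isSteadyState_eq :
    {σ | IsSteadyState H V σ} =
      {σ | IsDensityMatrix σ ∧ σ ∈ (LinearMap.ker (lindbladLinearMap H V)).restrictScalars ℝ} :=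
  rfl

theorem isExtremalSteadyState_iff_mem_extremePoints {ρ : Matrix n n ℂ} :
    IsExtremalSteadyState H V ρ ↔ ρ ∈ {σ | IsSteadyState H V σ}.extremePoints ℝ := by
  rw [mem_extremePoints]
  refine and_congr_right fun _ => ⟨fun h ρ₁ h₁ ρ₂ h₂ ⟨a, b, ha, hb, hab, hρ⟩ => ?_,
    fun h a ρ₁ ρ₂ ha ha₁ h₁ h₂ hρ => h ρ₁ h₁ ρ₂ h₂ ⟨a, 1 - a, ha, by linarith, by ring, hρ.symm⟩⟩
  obtain rfl : b = 1 - a := by linarith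
  exact h a ρ₁ ρ₂ ha (by linarith) h₁ h₂ hρ.symm

end Lindblad

theorem extremal_iff_unique_in_support_general (N : ℕ)
    (H : Matrix (Fin N) (Fin N) ℂ)
    {ι : Type*} [Fintype ι] (V : ι → Matrix (Fin N) (Fin N) ℂ)
    (ρ : Matrix (Fin N) (Fin N) ℂ) (hρ : IsSteadyState H V ρ) :
    IsExtremalSteadyState H V ρ ↔
      ∀ σ : Matrix (Fin N) (Fin N) ℂ, IsSteadyState H V σ →
        matSupport σ ≤ matSupport ρ → σ = ρ := by
  rw [isExtremalSteadyState_iff_mem_extremePoints, setOf_isSteadyState_eq,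
    mem_extremePoints_iff_forall_matSupport_le hρ.1 hρ.2]
  exact forall_congr' fun σ => ⟨fun h hσ => h hσ.1 hσ.2, fun h hσ hσK => h ⟨hσ, hσK⟩⟩

/-- A steady state is extremal iff it is the unique steady state whose support is
contained in its own support. -/
theorem extremal_iff_unique_in_support (N : ℕ) (hN : 1 ≤ N)
    (H : Matrix (Fin N) (Fin N) ℂ) (hH : H.IsHermitian)
    {ι : Type*} [Fintype ι] (V : ι → Matrix (Fin N) (Fin N) ℂ)
    (ρ : Matrix (Fin N) (Fin N) ℂ) (hρ : IsSteadyState H V ρ) :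
    IsExtremalSteadyState H V ρ ↔
      ∀ σ : Matrix (Fin N) (Fin N) ℂ, IsSteadyState H V σ →
        matSupport σ ≤ matSupport ρ → σ = ρ :=
  extremal_iff_unique_in_support_general N H V ρ hρ
end

section
/- If ρ is a steady state of the Lindblad generator with rank(ρ) < N (i.e., ρ lies on the boundary of the set of density matrices), then its support S = supp(ρ) is an invariant subspace for each Lindblad operator V_d: for every d and every vector x ∈ S, V_d x ∈ S. -/
/-!
Sandwiching `𝓛(ρ) = 0` between `y⋆` and `y` for a vector `y ∈ ker ρ` kills the Hamiltonian and
anticommutator terms, leaving `Σ_d ⟨V_d† y, ρ V_d† y⟩ = 0`. Each summand is nonnegative, so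
`ρ V_d† y = 0`: the kernel of `ρ` is invariant under every `V_d†`. Since `ρ` is Hermitian, its
support is the orthogonal complement of its kernel, hence invariant under every `V_d`.
-/

open Matrix
open scoped ComplexOrder

namespace Matrix

theorem IsHermitian.star_vecMul_eq_zero {n α : Type*} [Fintype n] [NonUnitalSemiring α]
    [StarRing α] {A : Matrix n n α} (hA : A.IsHermitian) {y : n → α} (hy : A *ᵥ y = 0) :
    star y ᵥ* A = 0 := by
  rw [← hA.eq, ← star_mulVec, hy, star_zero]

variable {n 𝕜 : Type*} [Fintype n] [RCLike 𝕜]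

theorem IsHermitian.mem_range_mulVecLin_iff [DecidableEq n] {A : Matrix n n 𝕜}
    (hA : A.IsHermitian) {z : n → 𝕜} :
    z ∈ LinearMap.range A.mulVecLin ↔ ∀ y, A *ᵥ y = 0 → star y ⬝ᵥ z = 0 := by
  have hrange : LinearMap.range A.toEuclideanLin = (LinearMap.ker A.toEuclideanLin)ᗮ := by
    rw [← (isSymmetric_toEuclideanLin_iff.mpr hA).orthogonal_range,
      Submodule.orthogonal_orthogonal]
  have hz : z ∈ LinearMap.range A.mulVecLin ↔
      WithLp.toLp 2 z ∈ LinearMap.range A.toEuclideanLin := by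
    constructor
    · rintro ⟨u, rfl⟩
      exact ⟨WithLp.toLp 2 u, by simp⟩
    · rintro ⟨u, hu⟩
      exact ⟨u.ofLp, by simpa using congrArg WithLp.ofLp hu⟩
  rw [hz, hrange, Submodule.mem_orthogonal]
  constructor
  · intro h y hy
    simpa [EuclideanSpace.inner_eq_star_dotProduct, dotProduct_comm] using
      h (WithLp.toLp 2 y) (by simp [hy])
  · intro h w hw
    simpa [EuclideanSpace.inner_eq_star_dotProduct, dotProduct_comm] using
      h w.ofLp (by simpa using congrArg WithLp.ofLp hw)

theorem IsHermitian.mulVec_mem_range_mulVecLin [DecidableEq n] {A B : Matrix n n 𝕜}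
    (hA : A.IsHermitian) (hB : ∀ y, A *ᵥ y = 0 → A *ᵥ (Bᴴ *ᵥ y) = 0) {x : n → 𝕜}
    (hx : x ∈ LinearMap.range A.mulVecLin) : B *ᵥ x ∈ LinearMap.range A.mulVecLin := by
  rw [hA.mem_range_mulVecLin_iff] at hx ⊢
  intro y hy
  simpa [dotProduct_mulVec, star_mulVec] using hx _ (hB y hy)

end Matrix

section Lindblad

variable {n ι : Type*} [Fintype n] [DecidableEq n] [Fintype ι]

theorem dotProduct_lindblad_mulVec_of_mulVec_eq_zero (H : Matrix n n ℂ) (V : ι → Matrix n n ℂ)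
    {ρ : Matrix n n ℂ} (hρ : ρ.IsHermitian) {y : n → ℂ} (hy : ρ *ᵥ y = 0) :
    star y ⬝ᵥ lindblad H V ρ *ᵥ y = ∑ d, star ((V d)ᴴ *ᵥ y) ⬝ᵥ ρ *ᵥ ((V d)ᴴ *ᵥ y) := by
  have hyρ := hρ.star_vecMul_eq_zero hy
  have left : ∀ M : Matrix n n ℂ, star y ⬝ᵥ (M * ρ) *ᵥ y = 0 := fun M => by
    rw [← mulVec_mulVec, hy, mulVec_zero, dotProduct_zero]
  have right : ∀ M : Matrix n n ℂ, star y ⬝ᵥ (ρ * M) *ᵥ y = 0 := fun M => by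
    rw [← mulVec_mulVec, dotProduct_mulVec, hyρ, zero_dotProduct]
  simp only [lindblad, add_mulVec, sub_mulVec, smul_mulVec, sum_mulVec, dotProduct_add,
    dotProduct_sub, dotProduct_smul, dotProduct_sum, left, right, sub_self, smul_zero, add_zero,
    sub_zero, zero_add]
  refine Finset.sum_congr rfl fun d _ => ?_
  rw [← mulVec_mulVec, ← mulVec_mulVec, dotProduct_mulVec, star_mulVec,
    conjTranspose_conjTranspose]

theorem IsSteadyState.mulVec_conjTranspose_mulVec_eq_zero {H : Matrix n n ℂ}
    {V : ι → Matrix n n ℂ} {ρ : Matrix n n ℂ} (hρ : IsSteadyState H V ρ) {y : n → ℂ}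
    (hy : ρ *ᵥ y = 0) (d : ι) : ρ *ᵥ ((V d)ᴴ *ᵥ y) = 0 := by
  obtain ⟨⟨hpsd, -⟩, hL⟩ := hρ
  have hsum := dotProduct_lindblad_mulVec_of_mulVec_eq_zero H V hpsd.isHermitian hy
  rw [hL, zero_mulVec, dotProduct_zero, eq_comm,
    Finset.sum_eq_zero_iff_of_nonneg fun e _ => hpsd.dotProduct_mulVec_nonneg _] at hsum
  exact (hpsd.dotProduct_mulVec_zero_iff _).mp (hsum d (Finset.mem_univ d))

end Lindblad

theorem steady_state_boundary_support_invariant_general (N : ℕ)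
    (H : Matrix (Fin N) (Fin N) ℂ)
    {ι : Type*} [Fintype ι] (V : ι → Matrix (Fin N) (Fin N) ℂ)
    (ρ : Matrix (Fin N) (Fin N) ℂ) (hρ : IsSteadyState H V ρ) :
    ∀ d : ι, ∀ x ∈ matSupport ρ, (V d).mulVec x ∈ matSupport ρ := fun d _ hx =>
  hρ.1.1.isHermitian.mulVec_mem_range_mulVecLin
    (fun _ hy => hρ.mulVec_conjTranspose_mulVec_eq_zero hy d) hx

/-- If `ρ` is a steady state at the boundary (rank < N), then its support is invariant
under each Lindblad operator `V_d`. -/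
theorem steady_state_boundary_support_invariant (N : ℕ) (hN : 1 ≤ N)
    (H : Matrix (Fin N) (Fin N) ℂ) (hH : H.IsHermitian)
    {ι : Type*} [Fintype ι] (V : ι → Matrix (Fin N) (Fin N) ℂ)
    (ρ : Matrix (Fin N) (Fin N) ℂ) (hρ : IsSteadyState H V ρ) (hrank : ρ.rank < N) :
    ∀ d : ι, ∀ x ∈ matSupport ρ, (V d).mulVec x ∈ matSupport ρ :=
  steady_state_boundary_support_invariant_general N H V ρ hρ
end

section
/- Let ρ_ss be an extremal steady state of the Lindblad generator. If there is no nonzero subspace S of ℂ^N orthogonal to supp(ρ_ss) that is invariant under every Lindblad operator V_d (i.e., V_d(S) ⊆ S for all d), then ρ_ss is the unique steady state. -/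
open Matrix
open scoped ComplexOrder

/-!
Let `P` be the support projection of `ρss`. Since `𝓛` is trace preserving, for a positive `B` with
support projection `Q` the weight `Σ_d tr((1 - Q) V_d B V_d† (1 - Q))` carried out of `supp B` by
the jumps equals `-tr(Q 𝓛(B) Q)`. Hence `supp ρss` is invariant under every `V_d`; this makes the
corner `B = (1 - P) σ (1 - P)` of any steady state `σ` satisfy `(1 - P) 𝓛(B) (1 - P) = 0`, so
`supp B` is invariant under every `V_d` as well. It is orthogonal to `supp ρss`, so `B = 0` by
hypothesis: `σ` lives on `supp ρss`, hence `t σ ≤ ρss` for small `t > 0`, and extremality of `ρss`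
forces `σ = ρss`.
-/

open scoped MatrixOrder
open Filter Topology

namespace Matrix

variable {𝕜 n : Type*} [RCLike 𝕜] [Fintype n]

lemma PosSemidef.mul_mul_of_isSelfAdjoint {A P : Matrix n n 𝕜} (hA : A.PosSemidef)
    (hP : IsSelfAdjoint P) : (P * A * P).PosSemidef :=
  nonneg_iff_posSemidef.1 (hP.conjugate_nonneg (nonneg_iff_posSemidef.2 hA))

variable [DecidableEq n]

lemma PosSemidef.mul_eq_zero_of_mul_mul_conjTranspose_eq_zero {A X : Matrix n n 𝕜}
    (hA : A.PosSemidef) (h : X * A * Xᴴ = 0) : X * A = 0 := by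
  have hsq : CFC.sqrt A * CFC.sqrt A = A := CFC.sqrt_mul_sqrt_self A hA.nonneg
  have hsqH : (CFC.sqrt A)ᴴ = CFC.sqrt A := (CFC.sqrt_nonneg A).posSemidef.1
  have : X * CFC.sqrt A = 0 := by
    rw [← self_mul_conjTranspose_eq_zero, conjTranspose_mul, hsqH, Matrix.mul_assoc,
      ← Matrix.mul_assoc (CFC.sqrt A), hsq, ← Matrix.mul_assoc, h]
  rw [← hsq, ← Matrix.mul_assoc, this, Matrix.zero_mul]

lemma PosSemidef.mul_eq_zero_of_sum_trace_eq_zero {ι : Type*} [Fintype ι] {A : Matrix n n 𝕜}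
    (hA : A.PosSemidef) {X : ι → Matrix n n 𝕜} (h : ∑ d, (X d * A * (X d)ᴴ).trace = 0)
    (d : ι) : X d * A = 0 := by
  have hpsd (e : ι) : (X e * A * (X e)ᴴ).PosSemidef := hA.mul_mul_conjTranspose_same (X e)
  have htr : (X d * A * (X d)ᴴ).trace = 0 :=
    (Finset.sum_eq_zero_iff_of_nonneg fun e _ => (hpsd e).trace_nonneg).1 h d (Finset.mem_univ d)
  exact hA.mul_eq_zero_of_mul_mul_conjTranspose_eq_zero ((hpsd d).trace_eq_zero_iff.1 htr)

lemma trace_one_sub_mul_mul_one_sub {P : Matrix n n 𝕜} (hP : IsIdempotentElem P)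
    (M : Matrix n n 𝕜) : ((1 - P) * M * (1 - P)).trace = M.trace - (P * M * P).trace := by
  rw [trace_mul_cycle, hP.one_sub.eq, trace_mul_cycle P, hP.eq, Matrix.sub_mul, Matrix.one_mul,
    trace_sub]

noncomputable def supportProj (A : Matrix n n 𝕜) : Matrix n n 𝕜 :=
  cfc (fun x : ℝ => if x = 0 then 0 else 1) A

lemma continuousOn_spectrum (A : Matrix n n 𝕜) (f : ℝ → ℝ) : ContinuousOn f (spectrum ℝ A) :=
  A.finite_real_spectrum.continuousOn f

lemma IsHermitian.mul_cfc {A : Matrix n n 𝕜} (hA : A.IsHermitian) (f : ℝ → ℝ) :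
    A * cfc f A = cfc (fun x => x * f x) A := by
  rw [cfc_mul _ _ _ (A.continuousOn_spectrum _) (A.continuousOn_spectrum _),
    cfc_id' ℝ A hA.isSelfAdjoint]

lemma isStarProjection_supportProj (A : Matrix n n 𝕜) : IsStarProjection A.supportProj where
  isIdempotentElem := by
    rw [IsIdempotentElem, supportProj,
      ← cfc_mul _ _ _ (A.continuousOn_spectrum _) (A.continuousOn_spectrum _)]
    congr 1 with x
    split_ifs <;> simp
  isSelfAdjoint := cfc_predicate _ _

lemma IsHermitian.mul_supportProj {A : Matrix n n 𝕜} (hA : A.IsHermitian) :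
    A * A.supportProj = A := by
  rw [supportProj, hA.mul_cfc]
  conv_rhs => rw [← cfc_id' ℝ A hA.isSelfAdjoint]
  congr 1 with x
  split_ifs <;> simp_all

lemma IsHermitian.supportProj_mul {A : Matrix n n 𝕜} (hA : A.IsHermitian) :
    A.supportProj * A = A := by
  simpa [hA.star_eq, A.isStarProjection_supportProj.isSelfAdjoint.star_eq]
    using congr(star $(hA.mul_supportProj))

lemma IsHermitian.one_sub_supportProj_mul {A : Matrix n n 𝕜} (hA : A.IsHermitian) :
    (1 - A.supportProj) * A = 0 := by
  rw [Matrix.sub_mul, Matrix.one_mul, hA.supportProj_mul, sub_self]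

lemma IsHermitian.mul_one_sub_supportProj {A : Matrix n n 𝕜} (hA : A.IsHermitian) :
    A * (1 - A.supportProj) = 0 := by
  rw [Matrix.mul_sub, Matrix.mul_one, hA.mul_supportProj, sub_self]

lemma IsHermitian.mul_cfc_inv {A : Matrix n n 𝕜} (hA : A.IsHermitian) :
    A * cfc (·⁻¹ : ℝ → ℝ) A = A.supportProj := by
  rw [supportProj, hA.mul_cfc]
  congr 1 with x
  split_ifs <;> simp_all

lemma IsHermitian.mul_supportProj_eq_zero {A X : Matrix n n 𝕜} (hA : A.IsHermitian)
    (h : X * A = 0) : X * A.supportProj = 0 := by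
  rw [← hA.mul_cfc_inv, ← Matrix.mul_assoc, h, Matrix.zero_mul]

lemma IsHermitian.supportProj_mul_eq_zero {A X : Matrix n n 𝕜} (hA : A.IsHermitian)
    (h : A * X = 0) : A.supportProj * X = 0 := by
  have h' : Xᴴ * A = 0 := by
    rw [← hA.eq, ← conjTranspose_mul, h, conjTranspose_zero]
  have hPH : A.supportProjᴴ = A.supportProj := A.isStarProjection_supportProj.isSelfAdjoint
  simpa [conjTranspose_mul, hPH] using congr($(hA.mul_supportProj_eq_zero h')ᴴ)

lemma PosSemidef.exists_pos_smul_supportProj_le {A : Matrix n n 𝕜} (hA : A.PosSemidef) :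
    ∃ a : ℝ, 0 < a ∧ a • A.supportProj ≤ A := by
  have hspec (x) (hx : x ∈ spectrum ℝ A) : 0 ≤ x :=
    spectrum_nonneg_of_nonneg (nonneg_iff_posSemidef.2 hA) hx
  have hfin : {x ∈ spectrum ℝ A | x ≠ 0}.Finite :=
    A.finite_real_spectrum.subset fun x hx => hx.1
  have hsmall : ∀ᶠ a in 𝓝[>] (0 : ℝ), ∀ x ∈ {x ∈ spectrum ℝ A | x ≠ 0}, a ≤ x :=
    hfin.eventually_all.2 fun x hx =>
      mem_of_superset (Ioc_mem_nhdsGT ((hspec x hx.1).lt_of_ne' hx.2)) fun a ha => ha.2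
  obtain ⟨a, hle, ha⟩ := (hsmall.and self_mem_nhdsWithin).exists
  refine ⟨a, ha, ?_⟩
  rw [supportProj, ← cfc_smul _ _ _ (A.continuousOn_spectrum _)]
  conv_rhs => rw [← cfc_id' ℝ A hA.isHermitian.isSelfAdjoint]
  refine cfc_mono (fun x hx => ?_) (A.continuousOn_spectrum _) (A.continuousOn_spectrum _)
  split_ifs with h
  · simp [h]
  · simpa using hle x ⟨hx, h⟩

lemma IsHermitian.exists_le_smul_one {A : Matrix n n 𝕜} (hA : A.IsHermitian) :
    ∃ r : ℝ, 0 < r ∧ A ≤ r • 1 := by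
  obtain ⟨c, hc⟩ := A.finite_real_spectrum.bddAbove
  refine ⟨max c 1, by positivity, ?_⟩
  rw [← Algebra.algebraMap_eq_smul_one]
  exact le_algebraMap_of_spectrum_le (fun x hx => (hc hx).trans (le_max_left _ _))
    hA.isSelfAdjoint

lemma PosSemidef.eventually_smul_le {A B : Matrix n n 𝕜} (hA : A.PosSemidef)
    (hB : B.PosSemidef) (hBA : A.supportProj * B = B) : ∀ᶠ t in 𝓝[>] (0 : ℝ), t • B ≤ A := by
  obtain ⟨a, ha, haA⟩ := hA.exists_pos_smul_supportProj_le
  obtain ⟨r, hr, hBr⟩ := hB.isHermitian.exists_le_smul_one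
  have hP := A.isStarProjection_supportProj
  set P := A.supportProj
  have hPBP : P * B * P = B := by
    have hBP : B * P = B := by
      simpa [hB.isHermitian.star_eq, hP.isSelfAdjoint.star_eq] using congr(star $hBA)
    rw [hBA, hBP]
  have hBP : B ≤ r • P := by
    simpa [hPBP, hP.isSelfAdjoint.star_eq, hP.isIdempotentElem.eq] using
      star_left_conjugate_le_conjugate hBr P
  filter_upwards [Ioc_mem_nhdsGT (div_pos ha hr)] with t ⟨ht, hta⟩
  calc t • B ≤ t • r • P := smul_le_smul_of_nonneg_left hBP ht.le
    _ = (t * r) • P := smul_smul t r P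
    _ ≤ a • P := smul_le_smul_of_nonneg_right ((le_div_iff₀ hr).1 hta) hP.nonneg
    _ ≤ A := haA

end Matrix

section MatSupport

variable {n : Type*} [Fintype n]

lemma matSupport_ne_bot [DecidableEq n] {A : Matrix n n ℂ} (hA : A ≠ 0) : matSupport A ≠ ⊥ := by
  rw [matSupport, Ne, LinearMap.range_eq_bot, ← Matrix.toLin'_apply', ← map_zero Matrix.toLin',
    Matrix.toLin'.injective.eq_iff]
  exact hA

lemma star_dotProduct_eq_zero_of_mem_matSupport {A B : Matrix n n ℂ} (h : Aᴴ * B = 0)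
    {x y : n → ℂ} (hx : x ∈ matSupport A) (hy : y ∈ matSupport B) : star x ⬝ᵥ y = 0 := by
  obtain ⟨u, rfl⟩ := hx
  obtain ⟨w, rfl⟩ := hy
  rw [mulVecLin_apply, mulVecLin_apply, star_mulVec, dotProduct_mulVec, vecMul_vecMul, h,
    vecMul_zero, zero_dotProduct]

lemma Matrix.IsHermitian.mulVec_mem_matSupport [DecidableEq n] {A X : Matrix n n ℂ}
    (hA : A.IsHermitian) (hX : (1 - A.supportProj) * X * A.supportProj = 0) {x : n → ℂ}
    (hx : x ∈ matSupport A) : X *ᵥ x ∈ matSupport A := by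
  obtain ⟨u, rfl⟩ := hx
  have hXP : X * A.supportProj = A.supportProj * X * A.supportProj := by
    rwa [Matrix.sub_mul, Matrix.sub_mul, Matrix.one_mul, sub_eq_zero] at hX
  have hXA : X * A = A * (cfc (·⁻¹ : ℝ → ℝ) A * X * A) :=
    calc X * A = X * A.supportProj * A := by rw [Matrix.mul_assoc, hA.supportProj_mul]
      _ = A.supportProj * X * A := by rw [hXP, Matrix.mul_assoc _ _ A, hA.supportProj_mul]
      _ = A * (cfc (·⁻¹ : ℝ → ℝ) A * X * A) := by
        rw [← hA.mul_cfc_inv]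
        simp only [Matrix.mul_assoc]
  exact ⟨(cfc (·⁻¹ : ℝ → ℝ) A * X * A) *ᵥ u, by
    rw [mulVecLin_apply, mulVecLin_apply, mulVec_mulVec, mulVec_mulVec, hXA]⟩

end MatSupport

section Lindblad

variable {n ι : Type*} [Fintype n] [DecidableEq n] [Fintype ι]
  (H : Matrix n n ℂ) (V : ι → Matrix n n ℂ)

noncomputable def lindbladLeft : Matrix n n ℂ :=
  -Complex.I • H - (1 / 2 : ℂ) • ∑ d, (V d)ᴴ * V d

noncomputable def lindbladRight : Matrix n n ℂ :=
  Complex.I • H - (1 / 2 : ℂ) • ∑ d, (V d)ᴴ * V d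

lemma lindblad_eq (ρ : Matrix n n ℂ) :
    lindblad H V ρ = ∑ d, V d * ρ * (V d)ᴴ + lindbladLeft H V * ρ + ρ * lindbladRight H V := by
  simp only [lindblad, lindbladLeft, lindbladRight, Finset.sum_sub_distrib, ← Finset.smul_sum,
    Finset.sum_add_distrib, ← Finset.sum_mul, ← Finset.mul_sum, Matrix.sub_mul, Matrix.mul_sub,
    Matrix.smul_mul, Matrix.mul_smul]
  module

lemma trace_lindblad (ρ : Matrix n n ℂ) : (lindblad H V ρ).trace = 0 := by
  have hLR : lindbladLeft H V + lindbladRight H V + ∑ d, (V d)ᴴ * V d = 0 := by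
    simp only [lindbladLeft, lindbladRight]
    module
  calc (lindblad H V ρ).trace
      = ((lindbladLeft H V + lindbladRight H V + ∑ d, (V d)ᴴ * V d) * ρ).trace := by
        simp only [lindblad_eq, trace_add, trace_sum, Matrix.add_mul, Finset.sum_mul,
          trace_mul_cycle (V _) ρ, trace_mul_comm ρ]
        ring
    _ = 0 := by rw [hLR, Matrix.zero_mul, trace_zero]

lemma isLinearMap_lindblad : IsLinearMap ℂ (lindblad H V) where
  map_add ρ τ := by
    simp only [lindblad_eq, Matrix.mul_add, Matrix.add_mul, Finset.sum_add_distrib]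
    abel
  map_smul c ρ := by
    simp only [lindblad_eq, Matrix.mul_smul, Matrix.smul_mul, smul_add, Finset.smul_sum]

lemma mul_lindblad_mul_conjTranspose {E B : Matrix n n ℂ} (hEB : E * B = 0)
    (hBE : B * Eᴴ = 0) : E * lindblad H V B * Eᴴ = ∑ d, (E * V d) * B * (E * V d)ᴴ := by
  simp only [lindblad_eq, Matrix.mul_add, Matrix.add_mul, Matrix.mul_sum, Matrix.sum_mul,
    conjTranspose_mul, Matrix.mul_assoc, hBE, Matrix.mul_zero, add_zero]
  simp only [← Matrix.mul_assoc, hEB, Matrix.zero_mul, add_zero]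

lemma one_sub_supportProj_mul_mul_supportProj_eq_zero {B : Matrix n n ℂ} (hB : B.PosSemidef)
    (h : B.supportProj * lindblad H V B * B.supportProj = 0) (d : ι) :
    (1 - B.supportProj) * V d * B.supportProj = 0 := by
  have hQ := B.isStarProjection_supportProj
  set Q := B.supportProj
  have hQH : (1 - Q)ᴴ = 1 - Q := hQ.one_sub.isSelfAdjoint.star_eq
  have hQB : (1 - Q) * B = 0 := hB.isHermitian.one_sub_supportProj_mul
  have hBQ : B * (1 - Q)ᴴ = 0 := by
    rw [hQH]
    exact hB.isHermitian.mul_one_sub_supportProj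
  have htr : ∑ e, ((1 - Q) * V e * B * ((1 - Q) * V e)ᴴ).trace = 0 := by
    rw [← trace_sum, ← mul_lindblad_mul_conjTranspose H V hQB hBQ, hQH,
      trace_one_sub_mul_mul_one_sub hQ.isIdempotentElem, trace_lindblad, h, trace_zero,
      sub_zero]
  exact hB.isHermitian.mul_supportProj_eq_zero (hB.mul_eq_zero_of_sum_trace_eq_zero htr d)

lemma lindblad_compress_eq {P σ : Matrix n n ℂ} (hP : IsStarProjection P)
    (hV : ∀ d, (1 - P) * V d * P = 0) (hL : (1 - P) * lindbladLeft H V * P = 0)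
    (hR : P * lindbladRight H V * (1 - P) = 0) :
    (1 - P) * lindblad H V ((1 - P) * σ * (1 - P)) * (1 - P) =
      (1 - P) * lindblad H V σ * (1 - P) := by
  have hPH : Pᴴ = P := hP.isSelfAdjoint.star_eq
  have hVH (d : ι) : P * ((V d)ᴴ * (1 - P)) = 0 := by
    simpa [hPH, Matrix.mul_assoc] using congr($(hV d)ᴴ)
  have hR' : P * (lindbladRight H V * (1 - P)) = 0 := by rw [← Matrix.mul_assoc, hR]
  have hleft (Y : Matrix n n ℂ) : (1 - P) * lindblad H V (P * Y) * (1 - P) = 0 := by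
    simp only [lindblad_eq, Matrix.mul_add, Matrix.mul_sum, ← Matrix.mul_assoc, hV, hL,
      hP.one_sub_mul_self, Matrix.zero_mul, Finset.sum_const_zero, add_zero]
  have hright (Y : Matrix n n ℂ) : (1 - P) * lindblad H V (Y * P) * (1 - P) = 0 := by
    simp only [lindblad_eq, Matrix.mul_add, Matrix.add_mul, Matrix.mul_sum, Matrix.sum_mul,
      Matrix.mul_assoc, hVH, hR', hP.mul_one_sub_self, Matrix.mul_zero, Finset.sum_const_zero,
      add_zero]
  have hσ : σ = (1 - P) * σ * (1 - P) + P * σ + (1 - P) * σ * P := by noncomm_ring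
  have hlin := isLinearMap_lindblad H V
  conv_rhs => rw [hσ, hlin.map_add, hlin.map_add, Matrix.mul_add, Matrix.mul_add,
    Matrix.add_mul, Matrix.add_mul, hleft, hright, add_zero, add_zero]

lemma lindblad_compress_eq_of_lindblad_eq_zero {ρ : Matrix n n ℂ} (hρ : ρ.PosSemidef)
    (hρL : lindblad H V ρ = 0) (σ : Matrix n n ℂ) :
    (1 - ρ.supportProj) * lindblad H V ((1 - ρ.supportProj) * σ * (1 - ρ.supportProj)) *
      (1 - ρ.supportProj) = (1 - ρ.supportProj) * lindblad H V σ * (1 - ρ.supportProj) := by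
  have hP := ρ.isStarProjection_supportProj
  set P := ρ.supportProj
  have hV : ∀ d, (1 - P) * V d * P = 0 :=
    one_sub_supportProj_mul_mul_supportProj_eq_zero H V hρ (by rw [hρL]; simp)
  have hEρ : (1 - P) * ρ = 0 := hρ.isHermitian.one_sub_supportProj_mul
  have hρE : ρ * (1 - P) = 0 := hρ.isHermitian.mul_one_sub_supportProj
  have hVρ (d : ι) : (1 - P) * V d * ρ = 0 := by
    rw [← hρ.isHermitian.supportProj_mul, ← Matrix.mul_assoc, hV d, Matrix.zero_mul]
  have hρV (d : ι) : ρ * ((V d)ᴴ * (1 - P)) = 0 := by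
    have hPH : Pᴴ = P := hP.isSelfAdjoint.star_eq
    simpa [hρ.isHermitian.eq, hPH, Matrix.mul_assoc] using congr($(hVρ d)ᴴ)
  have hL : (1 - P) * lindbladLeft H V * P = 0 := by
    refine hρ.isHermitian.mul_supportProj_eq_zero ?_
    simpa [lindblad_eq, Matrix.mul_add, Matrix.mul_sum, ← Matrix.mul_assoc, hVρ, hEρ]
      using congr((1 - P) * $hρL)
  have hR : P * lindbladRight H V * (1 - P) = 0 := by
    rw [Matrix.mul_assoc]
    refine hρ.isHermitian.supportProj_mul_eq_zero ?_
    simpa [lindblad_eq, Matrix.add_mul, Matrix.sum_mul, Matrix.mul_assoc, hρV, hρE]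
      using congr($hρL * (1 - P))
  exact lindblad_compress_eq H V hP hV hL hR

lemma mulVec_mem_matSupport_compress {ρ σ : Matrix n n ℂ} (hρ : ρ.PosSemidef)
    (hρL : lindblad H V ρ = 0) (hσ : σ.PosSemidef) (hσL : lindblad H V σ = 0) (d : ι)
    {x : n → ℂ} (hx : x ∈ matSupport ((1 - ρ.supportProj) * σ * (1 - ρ.supportProj))) :
    V d *ᵥ x ∈ matSupport ((1 - ρ.supportProj) * σ * (1 - ρ.supportProj)) := by
  have hP := ρ.isStarProjection_supportProj
  set P := ρ.supportProj
  set B := (1 - P) * σ * (1 - P)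
  have hB : B.PosSemidef := hσ.mul_mul_of_isSelfAdjoint hP.one_sub.isSelfAdjoint
  have hQE : B.supportProj * (1 - P) = B.supportProj := by
    have hBP : B * P = 0 := by rw [Matrix.mul_assoc, hP.one_sub_mul_self, Matrix.mul_zero]
    rw [Matrix.mul_sub, Matrix.mul_one, hB.isHermitian.supportProj_mul_eq_zero hBP, sub_zero]
  have hEQ : (1 - P) * B.supportProj = B.supportProj := by
    have hPB : P * B = 0 := by
      rw [← Matrix.mul_assoc, ← Matrix.mul_assoc, hP.mul_one_sub_self, Matrix.zero_mul,
        Matrix.zero_mul]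
    rw [Matrix.sub_mul, Matrix.one_mul, hB.isHermitian.mul_supportProj_eq_zero hPB, sub_zero]
  refine hB.isHermitian.mulVec_mem_matSupport
    (one_sub_supportProj_mul_mul_supportProj_eq_zero H V hB ?_ d) hx
  calc B.supportProj * lindblad H V B * B.supportProj
      = B.supportProj * (1 - P) * lindblad H V B * ((1 - P) * B.supportProj) := by
        rw [hQE, hEQ]
    _ = B.supportProj * ((1 - P) * lindblad H V B * (1 - P)) * B.supportProj := by
        simp only [Matrix.mul_assoc]
    _ = 0 := by
        rw [lindblad_compress_eq_of_lindblad_eq_zero H V hρ hρL, hσL, Matrix.mul_zero,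
          Matrix.zero_mul, Matrix.mul_zero, Matrix.zero_mul]

lemma IsExtremalSteadyState.eq_of_smul_le {ρ σ : Matrix n n ℂ}
    (hρ : IsExtremalSteadyState H V ρ) (hσ : IsSteadyState H V σ) {t : ℝ} (ht₀ : 0 < t)
    (ht₁ : t < 1) (hle : t • σ ≤ ρ) : σ = ρ := by
  have ht : 1 - t ≠ 0 := (sub_pos.2 ht₁).ne'
  have hτ : IsSteadyState H V ((1 - t)⁻¹ • (ρ - t • σ)) := by
    refine ⟨⟨?_, ?_⟩, ?_⟩
    · exact nonneg_iff_posSemidef.1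
        (smul_nonneg (inv_nonneg.2 (sub_pos.2 ht₁).le) (sub_nonneg.2 hle))
    · rw [trace_smul, trace_sub, trace_smul, hρ.1.1.2, hσ.1.2,
        show (1 : ℂ) - t • 1 = (1 - t) • 1 by rw [sub_smul, one_smul], smul_smul,
        inv_mul_cancel₀ ht, one_smul]
    · have hlin := isLinearMap_lindblad H V
      rw [← Complex.coe_smul, hlin.map_smul, hlin.map_sub, ← Complex.coe_smul, hlin.map_smul,
        hρ.1.2, hσ.2, smul_zero, sub_zero, smul_zero]
  have hdecomp : ρ = t • σ + (1 - t) • (1 - t)⁻¹ • (ρ - t • σ) := by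
    rw [smul_smul, mul_inv_cancel₀ ht, one_smul, add_sub_cancel]
  exact (hρ.2 t σ _ ht₀ ht₁ hσ hτ hdecomp).1

end Lindblad

theorem unique_steady_state_of_no_orthogonal_invariant_subspace_general
    (N : ℕ)
    (H : Matrix (Fin N) (Fin N) ℂ)
    {ι : Type*} [Fintype ι] (V : ι → Matrix (Fin N) (Fin N) ℂ)
    (ρss : Matrix (Fin N) (Fin N) ℂ) (hext : IsExtremalSteadyState H V ρss)
    (hno : ¬ ∃ S : Submodule ℂ (Fin N → ℂ), S ≠ ⊥ ∧
      (∀ x ∈ S, ∀ y ∈ matSupport ρss, star x ⬝ᵥ y = 0) ∧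
      (∀ d : ι, ∀ x ∈ S, (V d).mulVec x ∈ S)) :
    ∀ σ : Matrix (Fin N) (Fin N) ℂ, IsSteadyState H V σ → σ = ρss := by
  intro σ hσ
  obtain ⟨⟨hρ, -⟩, hρL⟩ := hext.1
  have hP := ρss.isStarProjection_supportProj
  set P := ρss.supportProj
  have hB := hσ.1.1.mul_mul_of_isSelfAdjoint hP.one_sub.isSelfAdjoint
  by_cases hB0 : (1 - P) * σ * (1 - P) = 0
  · have hPσ : P * σ = σ := by
      have hEσ : (1 - P) * σ = 0 := hσ.1.1.mul_eq_zero_of_mul_mul_conjTranspose_eq_zero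
        (by rwa [show (1 - P)ᴴ = 1 - P from hP.one_sub.isSelfAdjoint.star_eq])
      rwa [Matrix.sub_mul, Matrix.one_mul, sub_eq_zero, eq_comm] at hEσ
    obtain ⟨t, hle, ht⟩ :=
      ((hρ.eventually_smul_le hσ.1.1 hPσ).and (Ioo_mem_nhdsGT one_pos)).exists
    exact hext.eq_of_smul_le H V hσ ht.1 ht.2 hle
  · have hBρ : ((1 - P) * σ * (1 - P))ᴴ * ρss = 0 := by
      rw [hB.isHermitian.eq, Matrix.mul_assoc, hρ.isHermitian.one_sub_supportProj_mul,
        Matrix.mul_zero]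
    exact absurd ⟨_, matSupport_ne_bot hB0,
      fun x hx y hy => star_dotProduct_eq_zero_of_mem_matSupport hBρ hx hy,
      fun d x hx => mulVec_mem_matSupport_compress H V hρ hρL hσ.1.1 hσ.2 d hx⟩ hno

/-- If no nonzero subspace orthogonal to the support of an extremal steady state is
invariant under every Lindblad operator, then that steady state is unique. -/
theorem unique_steady_state_of_no_orthogonal_invariant_subspace
    (N : ℕ) (hN : 1 ≤ N)
    (H : Matrix (Fin N) (Fin N) ℂ) (hH : H.IsHermitian)
    {ι : Type*} [Fintype ι] (V : ι → Matrix (Fin N) (Fin N) ℂ)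
    (ρss : Matrix (Fin N) (Fin N) ℂ) (hext : IsExtremalSteadyState H V ρss)
    (hno : ¬ ∃ S : Submodule ℂ (Fin N → ℂ), S ≠ ⊥ ∧
      (∀ x ∈ S, ∀ y ∈ matSupport ρss, star x ⬝ᵥ y = 0) ∧
      (∀ d : ι, ∀ x ∈ S, (V d).mulVec x ∈ S)) :
    ∀ σ : Matrix (Fin N) (Fin N) ℂ, IsSteadyState H V σ → σ = ρss :=
  unique_steady_state_of_no_orthogonal_invariant_subspace_general N H V ρss hext hno
end
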